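/- With O = C[[u^{-1}]] and the grading g = ⊕_{r=−k}^{k} g_r associated to a simple root α of coefficient k, the subspace O_α = Σ_{r=1}^{k} u^{-1}O·g_r + Σ_{r=1−k}^{0} O·g_r + uO·g_{−k} is a Lie subalgebra of g((u^{-1})). -/

import Mathlib

attribute [-instance] HahnSeries.powerSeriesAlgebra

open TensorProduct

/-- `u^{-m}·𝕆` where `𝕆 = ℂ[[u⁻¹]]`: the Laurent series (in `t = u⁻¹`) whose
coefficients vanish below `m`.  Thus `coeffGe 0 = 𝕆`, `coeffGe 1 = u⁻¹𝕆`,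
`coeffGe (-1) = u𝕆`. -/
noncomputable def coeffGe (m : ℤ) : Submodule ℂ (LaurentSeries ℂ) where
  carrier := {f | ∀ n < m, f.coeff n = 0}
  add_mem' := by
    intro a b ha hb n hn
    simp only [HahnSeries.coeff_add, ha n hn, hb n hn, add_zero]
  zero_mem' := by intro n hn; simp
  smul_mem' := by
    intro c f hf n hn
    simp only [HahnSeries.coeff_smul, hf n hn, smul_zero]

/-- The image of `S ⊗ W` in `ℂ((u⁻¹)) ⊗ g`, for `S` a subspace of Laurent series and
`W` a subspace of `g`. -/
noncomputable def tens {g : Type*} [AddCommGroup g] [Module ℂ g]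
    (S : Submodule ℂ (LaurentSeries ℂ)) (W : Submodule ℂ g) :
    Submodule ℂ (LaurentSeries ℂ ⊗[ℂ] g) :=
  LinearMap.range (TensorProduct.map S.subtype W.subtype)

/-!
Write `m(r) = 1, 0, -1` according as `1 ≤ r ≤ k`, `1 - k ≤ r ≤ 0`, `r = -k`, so that
`O_α = Σ_r u^{-m(r)}𝕆 ⊗ G r`. Since `⁅f ⊗ a, f' ⊗ b⁆ = f f' ⊗ ⁅a, b⁆` and lower bounds on the
orders of Laurent series add under multiplication, the bracket of two summands lies in
`u^{-(m(r)+m(s))}𝕆 ⊗ G (r+s)`. This vanishes unless `r + s ∈ [-k, k]`, and then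
`m(r+s) ≤ m(r) + m(s)`: the only negative value `m(-k) = -1` is compensated, because
`-k + s ∈ [-k, k]` forces `s ≥ 0`.
-/

theorem Submodule.lie_mem_span_of_forall_lie_mem {R L : Type*} [CommRing R] [LieRing L]
    [LieAlgebra R L] {s : Set L} (hs : ∀ x ∈ s, ∀ y ∈ s, ⁅x, y⁆ ∈ Submodule.span R s)
    {x y : L} (hx : x ∈ Submodule.span R s) (hy : y ∈ Submodule.span R s) :
    ⁅x, y⁆ ∈ Submodule.span R s := by
  induction hx, hy using Submodule.span_induction₂ with
  | mem_mem x y hx hy => exact hs x hx y hy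
  | zero_left y hy => simp
  | zero_right x hx => simp
  | add_left x y z _ _ _ hx hy => simpa using add_mem hx hy
  | add_right x y z _ _ _ hx hy => simpa using add_mem hx hy
  | smul_left r x y _ _ h => simpa using Submodule.smul_mem _ r h
  | smul_right r x y _ _ h => simpa using Submodule.smul_mem _ r h

lemma coeffGe_antitone : Antitone coeffGe :=
  fun _ _ h _ hf n hn => hf n (hn.trans_le h)

lemma mul_mem_coeffGe {a b : ℤ} {f f' : LaurentSeries ℂ}
    (hf : f ∈ coeffGe a) (hf' : f' ∈ coeffGe b) : f * f' ∈ coeffGe (a + b) := by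
  intro n hn
  rw [HahnSeries.coeff_mul]
  refine Finset.sum_eq_zero fun ij hij => ?_
  rw [Finset.mem_antidiagonal] at hij
  by_cases h : ij.1 < a
  · rw [hf _ h, zero_mul]
  · rw [hf' ij.2 (by omega), mul_zero]

lemma tens_eq_span {g : Type*} [AddCommGroup g] [Module ℂ g]
    (S : Submodule ℂ (LaurentSeries ℂ)) (W : Submodule ℂ g) :
    tens S W = Submodule.span ℂ {t | ∃ f ∈ S, ∃ x ∈ W, f ⊗ₜ[ℂ] x = t} := by
  rw [tens, TensorProduct.range_map_eq_span_tmul]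
  congr 1
  ext t
  constructor
  · rintro ⟨m, n, rfl⟩
    exact ⟨m, m.2, n, n.2, rfl⟩
  · rintro ⟨f, hf, x, hx, rfl⟩
    exact ⟨⟨f, hf⟩, ⟨x, hx⟩, rfl⟩

def minOrder (k r : ℤ) : ℤ := if 1 ≤ r then 1 else if 1 - k ≤ r then 0 else -1

lemma minOrder_add_le {k r s : ℤ} (hk : 1 ≤ k) (hr : r ∈ Set.Icc (-k) k)
    (hs : s ∈ Set.Icc (-k) k) (hrs : r + s ∈ Set.Icc (-k) k) :
    minOrder k (r + s) ≤ minOrder k r + minOrder k s := by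
  simp only [Set.mem_Icc] at hr hs hrs
  unfold minOrder
  split_ifs <;> omega

section OAlpha

variable {g : Type*} [LieRing g] [LieAlgebra ℂ g]

noncomputable def oAlpha (k : ℤ) (G : ℤ → Submodule ℂ g) :
    Submodule ℂ (LaurentSeries ℂ ⊗[ℂ] g) :=
  ⨆ r ∈ Set.Icc (-k) k, tens (coeffGe (minOrder k r)) (G r)

lemma oAlpha_eq {k : ℤ} (hk : 1 ≤ k) (G : ℤ → Submodule ℂ g) :
    oAlpha k G = (⨆ r ∈ Set.Icc 1 k, tens (coeffGe 1) (G r)) ⊔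
      (⨆ r ∈ Set.Icc (1 - k) 0, tens (coeffGe 0) (G r)) ⊔
      tens (coeffGe (-1)) (G (-k)) := by
  have hIcc : Set.Icc (-k) k = (Set.Icc 1 k ∪ Set.Icc (1 - k) 0) ∪ {-k} := by
    ext r
    simp only [Set.mem_union, Set.mem_Icc, Set.mem_singleton_iff]
    omega
  rw [oAlpha, hIcc, iSup_union, iSup_union, iSup_singleton]
  congr 2
  · refine iSup_congr fun r => iSup_congr fun hr => ?_
    rw [minOrder, if_pos hr.1]
  · refine iSup_congr fun r => iSup_congr fun hr => ?_
    rw [minOrder, if_neg (by have := hr.2; omega), if_pos hr.1]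
  · rw [minOrder, if_neg (by omega), if_neg (by omega)]

lemma oAlpha_eq_span (k : ℤ) (G : ℤ → Submodule ℂ g) :
    oAlpha k G = Submodule.span ℂ
      {t | ∃ r ∈ Set.Icc (-k) k, ∃ f ∈ coeffGe (minOrder k r), ∃ a ∈ G r, f ⊗ₜ[ℂ] a = t} := by
  simp only [oAlpha, tens_eq_span, ← Submodule.span_iUnion₂]
  congr 1
  ext t
  simp

lemma tmul_lie_tmul_mem_oAlpha {k : ℤ} (hk : 1 ≤ k) {G : ℤ → Submodule ℂ g}
    (hGbr : ∀ r s : ℤ, ∀ x ∈ G r, ∀ y ∈ G s, ⁅x, y⁆ ∈ G (r + s))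
    (hGout : ∀ r : ℤ, (r < -k ∨ k < r) → G r = ⊥)
    {r s : ℤ} (hr : r ∈ Set.Icc (-k) k) (hs : s ∈ Set.Icc (-k) k)
    {f f' : LaurentSeries ℂ} (hf : f ∈ coeffGe (minOrder k r))
    (hf' : f' ∈ coeffGe (minOrder k s))
    {a b : g} (ha : a ∈ G r) (hb : b ∈ G s) :
    ⁅f ⊗ₜ[ℂ] a, f' ⊗ₜ[ℂ] b⁆ ∈ oAlpha k G := by
  rw [LieAlgebra.ExtendScalars.bracket_tmul]
  by_cases hrs : r + s ∈ Set.Icc (-k) k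
  · have hff' : f * f' ∈ coeffGe (minOrder k (r + s)) :=
      coeffGe_antitone (minOrder_add_le hk hr hs hrs) (mul_mem_coeffGe hf hf')
    exact le_iSup₂ (f := fun r _ => tens (coeffGe (minOrder k r)) (G r)) (r + s) hrs
      ⟨⟨f * f', hff'⟩ ⊗ₜ ⟨_, hGbr r s a ha b hb⟩, rfl⟩
  · have hab := hGbr r s a ha b hb
    rw [hGout _ (by simp only [Set.mem_Icc] at hrs; omega), Submodule.mem_bot] at hab
    rw [hab, TensorProduct.tmul_zero]
    exact zero_mem _

end OAlpha

theorem O_alpha_is_subalgebra_general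
    {g : Type*} [LieRing g] [LieAlgebra ℂ g]
    (k : ℤ) (hk : 1 ≤ k)
    (G : ℤ → Submodule ℂ g)
    (hGbr : ∀ r s : ℤ, ∀ x ∈ G r, ∀ y ∈ G s, ⁅x, y⁆ ∈ G (r + s))
    (hGout : ∀ r : ℤ, (r < -k ∨ k < r) → G r = ⊥)
    (Oα : Submodule ℂ (LaurentSeries ℂ ⊗[ℂ] g))
    (hOα : Oα = (⨆ r ∈ Set.Icc 1 k, tens (coeffGe 1) (G r)) ⊔
        (⨆ r ∈ Set.Icc (1 - k) 0, tens (coeffGe 0) (G r)) ⊔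
        tens (coeffGe (-1)) (G (-k))) :
    ∀ x ∈ Oα, ∀ y ∈ Oα, ⁅x, y⁆ ∈ Oα := by
  rw [hOα, ← oAlpha_eq hk, oAlpha_eq_span]
  intro x hx y hy
  refine Submodule.lie_mem_span_of_forall_lie_mem (R := ℂ) (L := LaurentSeries ℂ ⊗[ℂ] g)
    ?_ hx hy
  rintro _ ⟨r, hr, f, hf, a, ha, rfl⟩ _ ⟨s, hs, f', hf', b, hb, rfl⟩
  rw [← oAlpha_eq_span]
  exact tmul_lie_tmul_mem_oAlpha hk hGbr hGout hr hs hf hf' ha hb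

/-- With `𝕆 = ℂ[[u⁻¹]]` and the grading `g = ⊕_{r=−k}^{k} G r`
associated to a simple root `α` of coefficient `k` (so `⁅G r, G s⁆ ⊆ G (r+s)`, with
`G r = 0` outside `[−k,k]`), the subspace
`𝕆_α = Σ_{r=1}^{k} u⁻¹𝕆·G r + Σ_{r=1−k}^{0} 𝕆·G r + u𝕆·G (−k)`
is a Lie subalgebra of `g((u⁻¹))`. -/
theorem O_alpha_is_subalgebra
    {g : Type*} [LieRing g] [LieAlgebra ℂ g] [FiniteDimensional ℂ g]
    (k : ℤ) (hk : 1 ≤ k)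
    (G : ℤ → Submodule ℂ g)
    (hGbr : ∀ r s : ℤ, ∀ x ∈ G r, ∀ y ∈ G s, ⁅x, y⁆ ∈ G (r + s))
    (hGout : ∀ r : ℤ, (r < -k ∨ k < r) → G r = ⊥)
    (hGtop : (⨆ r : ℤ, G r) = ⊤)
    (Oα : Submodule ℂ (LaurentSeries ℂ ⊗[ℂ] g))
    (hOα : Oα = (⨆ r ∈ Set.Icc 1 k, tens (coeffGe 1) (G r)) ⊔
        (⨆ r ∈ Set.Icc (1 - k) 0, tens (coeffGe 0) (G r)) ⊔
        tens (coeffGe (-1)) (G (-k))) :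
    ∀ x ∈ Oα, ∀ y ∈ Oα, ⁅x, y⁆ ∈ Oα :=
  O_alpha_is_subalgebra_general k hk G hGbr hGout Oα hOα
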